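/- arXiv:2305.02371 — 4 statements merged into one kernel-verified Lean document; each statement's English description precedes it below -/
import Mathlib

section
/- Let W be an n×n matrix with nonnegative real entries and let r ≥ 0 be a real number such that every cycle of length ℓ in the weighted digraph of W has value at most r^ℓ. Then every closed walk of length m in the digraph of W has value at most r^m. -/
open Matrix BigOperators

/-- Spectral radius of a real square matrix: the supremum of the absolute values of the
complex eigenvalues (roots of the characteristic polynomial of the complexified matrix). -/
noncomputable def specRad {m : Type*} [Fintype m] [DecidableEq m] (W : Matrix m m ℝ) : ℝ :=
  sSup {r : ℝ | ∃ μ : ℂ, (Matrix.charpoly (W.map Complex.ofReal)).IsRoot μ ∧ r = ‖μ‖}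

/-- The principal submatrix of `W` obtained by deleting the rows and columns indexed by `S`. -/
def delSub {n : ℕ} (W : Matrix (Fin n) (Fin n) ℝ) (S : Finset (Fin n)) :
    Matrix {i : Fin n // i ∉ S} {i : Fin n // i ∉ S} ℝ :=
  W.submatrix Subtype.val Subtype.val

/-- A closed walk of length `m ≥ 1` in the weighted digraph of `W`. -/
def IsClosedWalk {n : ℕ} (W : Matrix (Fin n) (Fin n) ℝ) (m : ℕ) (v : ℕ → Fin n) : Prop :=
  1 ≤ m ∧ v 0 = v m ∧ ∀ i < m, 0 < W (v i) (v (i + 1))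

/-- A cycle: a closed walk whose first `m` vertices are pairwise distinct. -/
def IsCycle {n : ℕ} (W : Matrix (Fin n) (Fin n) ℝ) (m : ℕ) (v : ℕ → Fin n) : Prop :=
  IsClosedWalk W m v ∧ ∀ i < m, ∀ j < m, v i = v j → i = j

/-- The value of a walk: the product of the weights of its arcs. -/
noncomputable def walkValue {n : ℕ} (W : Matrix (Fin n) (Fin n) ℝ) (m : ℕ) (v : ℕ → Fin n) : ℝ :=
  ∏ i ∈ Finset.range m, W (v i) (v (i + 1))

/-!
A closed walk that is not a cycle visits some vertex twice, at positions `a < a + d`. Cutting it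
there splits it into the closed subwalk between the two visits and the closed walk that skips it,
of lengths `d` and `m - d`, whose values multiply to the value of the original walk. Strong
induction on the length then reduces everything to cycles, and `r ^ d * r ^ (m - d) = r ^ m`.
-/

section

variable {n : ℕ} {W : Matrix (Fin n) (Fin n) ℝ}

theorem walkValue_congr {m : ℕ} {u v : ℕ → Fin n} (h : ∀ k ≤ m, u k = v k) :
    walkValue W m u = walkValue W m v :=
  Finset.prod_congr rfl fun k hk => by
    rw [Finset.mem_range] at hk
    rw [h k hk.le, h (k + 1) hk]

theorem walkValue_add (a b : ℕ) (v : ℕ → Fin n) :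
    walkValue W (a + b) v = walkValue W a v * walkValue W b (fun k => v (a + k)) :=
  Finset.prod_range_add _ a b

theorem IsClosedWalk.walkValue_pos {m : ℕ} {v : ℕ → Fin n} (hv : IsClosedWalk W m v) :
    0 < walkValue W m v :=
  Finset.prod_pos fun i hi => hv.2.2 i (Finset.mem_range.1 hi)

theorem IsClosedWalk.exists_repeat_of_not_isCycle {m : ℕ} {v : ℕ → Fin n}
    (hv : IsClosedWalk W m v) (hc : ¬IsCycle W m v) :
    ∃ a d e, 0 < d ∧ 0 < e ∧ m = a + d + e ∧ v a = v (a + d) := by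
  have : ∃ i j, i < j ∧ j < m ∧ v i = v j := by
    by_contra! h
    refine hc ⟨hv, fun i hi j hj hij => ?_⟩
    by_contra hne
    rcases Nat.lt_or_gt_of_ne hne with hlt | hlt
    · exact h i j hlt hj hij
    · exact h j i hlt hi hij.symm
  obtain ⟨i, j, hij, hjm, hvij⟩ := this
  exact ⟨i, j - i, m - j, by omega, by omega, by omega, by rwa [Nat.add_sub_cancel' hij.le]⟩

/-- The walk `v` with the closed subwalk on positions `a, …, a + d` removed. -/
def skipLoop (v : ℕ → Fin n) (a d : ℕ) : ℕ → Fin n :=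
  fun k => if k < a then v k else v (k + d)

variable {a d e : ℕ} {v : ℕ → Fin n}

theorem skipLoop_of_le (hloop : v a = v (a + d)) {k : ℕ} (hk : k ≤ a) :
    skipLoop v a d k = v k := by
  rcases hk.lt_or_eq with hk | rfl
  · simp [skipLoop, hk]
  · simp [skipLoop, hloop]

theorem skipLoop_add (k : ℕ) : skipLoop v a d (a + k) = v (a + d + k) := by
  simp [skipLoop, Nat.add_right_comm]

theorem IsClosedWalk.isClosedWalk_loop (hv : IsClosedWalk W (a + d + e) v) (hd : 0 < d)
    (hloop : v a = v (a + d)) : IsClosedWalk W d (fun k => v (a + k)) :=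
  ⟨hd, hloop, fun i hi => hv.2.2 (a + i) (by omega)⟩

theorem IsClosedWalk.isClosedWalk_skipLoop (hv : IsClosedWalk W (a + d + e) v) (he : 0 < e)
    (hloop : v a = v (a + d)) : IsClosedWalk W (a + e) (skipLoop v a d) := by
  refine ⟨by omega, ?_, fun i hi => ?_⟩
  · rw [skipLoop_of_le hloop (Nat.zero_le a), skipLoop_add, hv.2.1]
  · rcases Nat.lt_or_ge i a with hia | hia
    · rw [skipLoop_of_le hloop hia.le, skipLoop_of_le hloop hia]
      exact hv.2.2 i (by omega)
    · obtain ⟨k, rfl⟩ := Nat.exists_eq_add_of_le hia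
      rw [skipLoop_add, add_assoc a k 1, skipLoop_add]
      exact hv.2.2 (a + d + k) (by omega)

theorem walkValue_eq_loop_mul_skipLoop (hloop : v a = v (a + d)) :
    walkValue W (a + d + e) v =
      walkValue W d (fun k => v (a + k)) * walkValue W (a + e) (skipLoop v a d) := by
  rw [walkValue_add, walkValue_add, walkValue_add a e,
    walkValue_congr fun k hk => skipLoop_of_le hloop hk]
  simp only [skipLoop_add]
  ring

end

theorem closed_walk_value_le_of_cycle_bound_general {n : ℕ}
    (W : Matrix (Fin n) (Fin n) ℝ) (r : ℝ)
    (hcyc : ∀ (ℓ : ℕ) (c : ℕ → Fin n), IsCycle W ℓ c → walkValue W ℓ c ≤ r ^ ℓ)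
    (m : ℕ) (v : ℕ → Fin n) (hv : IsClosedWalk W m v) :
    walkValue W m v ≤ r ^ m := by
  induction m using Nat.strong_induction_on generalizing v with
  | _ m ih =>
  by_cases hc : IsCycle W m v
  · exact hcyc m v hc
  obtain ⟨a, d, e, hd, he, rfl, hloop⟩ := hv.exists_repeat_of_not_isCycle hc
  have hloopWalk := hv.isClosedWalk_loop hd hloop
  have hskipWalk := hv.isClosedWalk_skipLoop he hloop
  have hloopLe := ih d (by omega) _ hloopWalk
  have hskipLe := ih (a + e) (by omega) _ hskipWalk
  calc walkValue W (a + d + e) v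
      = walkValue W d (fun k => v (a + k)) * walkValue W (a + e) (skipLoop v a d) :=
        walkValue_eq_loop_mul_skipLoop hloop
    _ ≤ r ^ d * r ^ (a + e) :=
        mul_le_mul hloopLe hskipLe hskipWalk.walkValue_pos.le
          (hloopWalk.walkValue_pos.le.trans hloopLe)
    _ = r ^ (a + d + e) := by ring

/-- If every cycle of length `ℓ` has value at most `r ^ ℓ`, then every closed walk of length `m`
has value at most `r ^ m`. -/
theorem closed_walk_value_le_of_cycle_bound {n : ℕ} (hn : 1 ≤ n)
    (W : Matrix (Fin n) (Fin n) ℝ) (hW : ∀ i j, 0 ≤ W i j) (r : ℝ) (hr : 0 ≤ r)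
    (hcyc : ∀ (ℓ : ℕ) (c : ℕ → Fin n), IsCycle W ℓ c → walkValue W ℓ c ≤ r ^ ℓ)
    (m : ℕ) (v : ℕ → Fin n) (hv : IsClosedWalk W m v) :
    walkValue W m v ≤ r ^ m :=
  closed_walk_value_le_of_cycle_bound_general W r hcyc m v hv
end

section
/- Let W be an n×n matrix with nonnegative real entries. For every cycle C of length m in the weighted digraph of W, the spectral radius of W is at least the m-th root of the value of C (the geometric mean value of C). In particular, ρ(W) is at least the geometric mean value of the dominant cycle. -/
/-!
A cycle of value `V` through `i` can be traversed `k` times, so by nonnegativity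
`V ^ k ≤ (W ^ (m * k)) i i ≤ ‖W ^ (m * k)‖`. Gelfand's formula then gives
`V ^ (1 / m) ≤ lim ‖W ^ N‖ ^ (1 / N)`, the spectral radius of the complexified matrix,
whose spectrum consists of roots of the characteristic polynomial.
-/

open Matrix BigOperators

open Filter
open scoped ENNReal

attribute [local instance] Matrix.linftyOpNormedRing Matrix.linftyOpNormedAlgebra

theorem spectrum.rpow_one_div_le_spectralRadius {A : Type*} [NormedRing A] [NormedAlgebra ℂ A]
    [CompleteSpace A] (a : A) {r : ℝ≥0∞} {m : ℕ} (hm : 0 < m)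
    (h : ∀ k, r ^ k ≤ ‖a ^ (m * k)‖₊) : r ^ ((1 : ℝ) / m) ≤ spectralRadius ℂ a := by
  have hlim := (pow_nnnorm_pow_one_div_tendsto_nhds_spectralRadius a).comp
    (tendsto_id.const_mul_atTop' hm)
  refine ge_of_tendsto hlim (eventually_atTop.2 ⟨1, fun k hk => ?_⟩)
  calc r ^ ((1 : ℝ) / m) = (r ^ k) ^ ((1 : ℝ) / (m * k : ℕ)) := by
        rw [← ENNReal.rpow_natCast, ← ENNReal.rpow_mul]
        congr 1
        have : (k : ℝ) ≠ 0 := by positivity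
        push_cast
        field_simp
    _ ≤ _ := ENNReal.rpow_le_rpow (h k) (by positivity)

namespace Matrix

variable {ι R : Type*} [Fintype ι] [DecidableEq ι]

section OrderedSemiring

variable [CommSemiring R] [PartialOrder R] [IsOrderedRing R] {W : Matrix ι ι R}

theorem prod_le_pow_apply (hW : ∀ i j, 0 ≤ W i j) (v : ℕ → ι) (t : ℕ) :
    ∏ i ∈ Finset.range t, W (v i) (v (i + 1)) ≤ (W ^ t) (v 0) (v t) := by
  induction t with
  | zero => simp
  | succ t ih =>
    rw [Finset.prod_range_succ, pow_succ, mul_apply]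
    calc _ ≤ (W ^ t) (v 0) (v t) * W (v t) (v (t + 1)) :=
          mul_le_mul_of_nonneg_right ih (hW _ _)
      _ ≤ _ := Finset.single_le_sum (f := fun l => (W ^ t) (v 0) l * W l (v (t + 1)))
          (fun l _ => mul_nonneg (pow_apply_nonneg hW t _ _) (hW _ _)) (Finset.mem_univ _)

theorem apply_pow_le_pow_apply (hW : ∀ i j, 0 ≤ W i j) (i : ι) (k : ℕ) :
    W i i ^ k ≤ (W ^ k) i i := by
  simpa using prod_le_pow_apply hW (fun _ => i) k

end OrderedSemiring

theorem nnnorm_apply_le_linfty_opNNNorm {α : Type*} [NormedRing α] (A : Matrix ι ι α)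
    (i j : ι) : ‖A i j‖₊ ≤ ‖A‖₊ := by
  rw [linfty_opNNNorm_def]
  exact (Finset.single_le_sum (f := fun j => ‖A i j‖₊) (fun _ _ => zero_le)
    (Finset.mem_univ j)).trans
    (Finset.le_sup (f := fun i => ∑ j, ‖A i j‖₊) (Finset.mem_univ i))

theorem ofReal_pow_apply_le_nnnorm_map_pow (W : Matrix ι ι ℝ) (N : ℕ) (i j : ι) :
    ENNReal.ofReal ((W ^ N) i j) ≤ ‖W.map Complex.ofReal ^ N‖₊ := by
  have hmap : W.map Complex.ofReal ^ N = (W ^ N).map Complex.ofReal :=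
    (Matrix.map_pow W Complex.ofRealHom N).symm
  rw [hmap]
  calc ENNReal.ofReal ((W ^ N) i j) ≤ ‖(W ^ N) i j‖ₑ := Real.ofReal_le_enorm _
    _ = ‖((W ^ N).map Complex.ofReal) i j‖₊ := by simp [enorm_eq_nnnorm]
    _ ≤ _ := by exact_mod_cast nnnorm_apply_le_linfty_opNNNorm _ i j

theorem norm_le_specRad (W : Matrix ι ι ℝ) {μ : ℂ}
    (hμ : (W.map Complex.ofReal).charpoly.IsRoot μ) : ‖μ‖ ≤ specRad W := by
  have hroots : {μ : ℂ | (W.map Complex.ofReal).charpoly.IsRoot μ}.Finite :=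
    Polynomial.finite_setOfPred_isRoot (charpoly_monic _).ne_zero
  unfold specRad
  refine le_csSup ((hroots.image (‖·‖ : ℂ → ℝ)).subset ?_).bddAbove ⟨μ, hμ, rfl⟩
  rintro _ ⟨μ, hμ, rfl⟩
  exact ⟨μ, hμ, rfl⟩

theorem spectralRadius_map_ofReal_le_specRad (W : Matrix ι ι ℝ) :
    spectralRadius ℂ (W.map Complex.ofReal) ≤ ENNReal.ofReal (specRad W) := by
  refine iSup₂_le fun μ hμ => ?_
  rw [← enorm_eq_nnnorm, ← ofReal_norm]
  exact ENNReal.ofReal_le_ofReal (norm_le_specRad W (mem_spectrum_iff_isRoot_charpoly.mp hμ))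

end Matrix

theorem walkValue_pow_le_pow_apply {n : ℕ} {W : Matrix (Fin n) (Fin n) ℝ}
    (hW : ∀ i j, 0 ≤ W i j) {m : ℕ} {v : ℕ → Fin n} (hvm : v 0 = v m) (k : ℕ) :
    walkValue W m v ^ k ≤ (W ^ (m * k)) (v 0) (v 0) :=
  calc walkValue W m v ^ k ≤ (W ^ m) (v 0) (v 0) ^ k := by
        refine pow_le_pow_left₀ (Finset.prod_nonneg fun _ _ => hW _ _) ?_ k
        simpa [hvm] using prod_le_pow_apply hW v m
    _ ≤ ((W ^ m) ^ k) (v 0) (v 0) := apply_pow_le_pow_apply (pow_apply_nonneg hW m) _ k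
    _ = (W ^ (m * k)) (v 0) (v 0) := by rw [pow_mul]

theorem geom_mean_cycle_le_specRad_general {n : ℕ} (W : Matrix (Fin n) (Fin n) ℝ)
    (hW : ∀ i j, 0 ≤ W i j) (m : ℕ) (v : ℕ → Fin n) (hv : IsCycle W m v) :
    (walkValue W m v) ^ ((1 : ℝ) / (m : ℝ)) ≤ specRad W := by
  obtain ⟨⟨hm, hvm, hpos⟩, -⟩ := hv
  have hV : 0 < walkValue W m v := Finset.prod_pos fun i hi => hpos i (Finset.mem_range.mp hi)
  have hgelfand : ENNReal.ofReal (walkValue W m v ^ ((1 : ℝ) / m)) ≤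
      spectralRadius ℂ (W.map Complex.ofReal) := by
    rw [← ENNReal.ofReal_rpow_of_pos hV]
    refine spectrum.rpow_one_div_le_spectralRadius _ hm fun k => ?_
    calc ENNReal.ofReal (walkValue W m v) ^ k = ENNReal.ofReal (walkValue W m v ^ k) :=
          (ENNReal.ofReal_pow hV.le k).symm
      _ ≤ ENNReal.ofReal ((W ^ (m * k)) (v 0) (v 0)) :=
          ENNReal.ofReal_le_ofReal (walkValue_pow_le_pow_apply hW hvm k)
      _ ≤ _ := ofReal_pow_apply_le_nnnorm_map_pow W _ _ _
  have hle := hgelfand.trans (spectralRadius_map_ofReal_le_specRad W)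
  exact (ENNReal.ofReal_le_ofReal_iff'.mp hle).resolve_right (not_le.mpr (by positivity))

/-- The spectral radius of a nonnegative matrix is at least the geometric mean value of every
cycle of its weighted digraph; in particular it is at least the geometric mean value of the
dominant cycle. -/
theorem geom_mean_cycle_le_specRad {n : ℕ} (hn : 1 ≤ n) (W : Matrix (Fin n) (Fin n) ℝ)
    (hW : ∀ i j, 0 ≤ W i j) (m : ℕ) (v : ℕ → Fin n) (hv : IsCycle W m v) :
    (walkValue W m v) ^ ((1 : ℝ) / (m : ℝ)) ≤ specRad W :=
  geom_mean_cycle_le_specRad_general W hW m v hv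
end

section
/- Let n ≥ 2 and let W be the n×n nonnegative matrix of a weighted Hamiltonian cycle: W i j = w_i > 0 when j = i+1 (mod n) and W i j = 0 otherwise. Then ρ(W) = (w_0 · w_1 ⋯ w_{n−1})^{1/n}; for every vertex s, the principal submatrix W({s}) obtained by deleting row and column s satisfies ρ(W({s})) = 0, so the spectral influence of every vertex is 𝒮({s}) = 1 and the spectral cyclicality is 𝐒 = n. -/
open Matrix BigOperators

/-!
An eigenvector `v` of the weighted cycle for the eigenvalue `μ` satisfies `μ v i = w i v (i + 1)`;
going once around the cycle gives `μ ^ n v i = (∏ w) v i`, so every eigenvalue has modulus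
`(∏ w) ^ (1 / n)`. Deleting a vertex `s` leaves a weighted path: an eigenvector, extended by `0`
at `s`, with `μ ≠ 0` would vanish successively at `s - 1, s - 2, …`, so every eigenvalue is `0`.
-/

theorem Matrix.exists_mulVec_eq_smul_of_isRoot_charpoly {m R : Type*} [Fintype m] [DecidableEq m]
    [CommRing R] [IsDomain R] {A : Matrix m m R} {μ : R} (h : A.charpoly.IsRoot μ) :
    ∃ v ≠ 0, A *ᵥ v = μ • v := by
  rw [← charpoly_toLin', ← Module.End.hasEigenvalue_iff_isRoot_charpoly] at h
  obtain ⟨v, hv, hv0⟩ := h.exists_hasEigenvector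
  exact ⟨v, hv0, by rw [← toLin'_apply]; exact Module.End.mem_eigenspace_iff.mp hv⟩

theorem Matrix.submatrix_val_mulVec {ι R : Type*} [Fintype ι] [NonUnitalNonAssocSemiring R]
    {p : ι → Prop} [DecidablePred p] (A : Matrix ι ι R) {u : ι → R} (hu : ∀ i, ¬p i → u i = 0)
    (i : Subtype p) :
    (A.submatrix Subtype.val Subtype.val *ᵥ fun j : Subtype p => u j) i = (A *ᵥ u) i := by
  simp only [mulVec, dotProduct, submatrix_apply]
  rw [← Fintype.sum_subtype_add_sum_subtype p fun j => A i j * u j,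
    Fintype.sum_eq_zero (fun j : {x // ¬p x} => A i j * u j) fun j => by rw [hu j j.2, mul_zero],
    add_zero]

section SpecRad

variable {m : Type*} [Fintype m] [DecidableEq m] {W : Matrix m m ℝ}

theorem specRad_eq_of_forall_eigenvalue_norm_eq [Nonempty m] {r : ℝ}
    (h : ∀ (μ : ℂ) (v : m → ℂ), v ≠ 0 → W.map Complex.ofReal *ᵥ v = μ • v → ‖μ‖ = r) :
    specRad W = r := by
  have hroot : ∀ μ : ℂ, (W.map Complex.ofReal).charpoly.IsRoot μ → ‖μ‖ = r := fun μ hμ => by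
    obtain ⟨v, hv0, hv⟩ := Matrix.exists_mulVec_eq_smul_of_isRoot_charpoly hμ
    exact h μ v hv0 hv
  obtain ⟨μ₀, hμ₀⟩ : ∃ μ, (W.map Complex.ofReal).charpoly.IsRoot μ :=
    Complex.exists_root <| by rw [charpoly_degree_eq_dim]; exact_mod_cast Fintype.card_pos
  have : {r' : ℝ | ∃ μ : ℂ, (W.map Complex.ofReal).charpoly.IsRoot μ ∧ r' = ‖μ‖} = {r} := by
    ext x
    constructor
    · rintro ⟨μ, hμ, rfl⟩
      exact hroot μ hμ
    · rintro rfl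
      exact ⟨μ₀, hμ₀, (hroot μ₀ hμ₀).symm⟩
  rw [specRad, this, csSup_singleton]

theorem specRad_eq_zero_of_forall_eigenvalue_eq_zero
    (h : ∀ (μ : ℂ) (v : m → ℂ), v ≠ 0 → W.map Complex.ofReal *ᵥ v = μ • v → μ = 0) :
    specRad W = 0 := by
  have hroot : ∀ μ : ℂ, (W.map Complex.ofReal).charpoly.IsRoot μ → ‖μ‖ = 0 := fun μ hμ => by
    obtain ⟨v, hv0, hv⟩ := Matrix.exists_mulVec_eq_smul_of_isRoot_charpoly hμ
    rw [h μ v hv0 hv, norm_zero]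
  refine le_antisymm (Real.sSup_nonpos ?_) (Real.sSup_nonneg ?_) <;>
    rintro _ ⟨μ, hμ, rfl⟩ <;> simp [hroot μ hμ]

end SpecRad

open Fin.NatCast Fin.CommRing

section CycleMatrix

variable {n : ℕ} [NeZero n]

def cycleMatrix {R : Type*} [Zero R] (w : Fin n → R) : Matrix (Fin n) (Fin n) R :=
  of fun i j => if j = i + 1 then w i else 0

theorem cycleMatrix_apply {R : Type*} [Zero R] (w : Fin n → R) (i j : Fin n) :
    cycleMatrix w i j = if j = i + 1 then w i else 0 := rfl

theorem cycleMatrix_map {R S : Type*} [Zero R] [Zero S] (w : Fin n → R) {f : R → S}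
    (hf : f 0 = 0) :
    (cycleMatrix w).map f = cycleMatrix (f ∘ w) := by
  ext i j
  simp only [map_apply, cycleMatrix_apply, apply_ite f, hf, Function.comp_apply]

theorem cycleMatrix_mulVec {R : Type*} [NonUnitalNonAssocSemiring R] (w u : Fin n → R)
    (i : Fin n) :
    (cycleMatrix w *ᵥ u) i = w i * u (i + 1) := by
  simp [mulVec, dotProduct, cycleMatrix_apply, ite_mul]

theorem Fin.val_eq_val_add_one_mod_iff {i j : Fin n} :
    (j : ℕ) = ((i : ℕ) + 1) % n ↔ j = i + 1 := by
  rw [Fin.ext_iff, Fin.val_add, Fin.val_one', Nat.add_mod_mod]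

theorem pow_mul_eq_prod_range_mul {M : Type*} [CommMonoid M] {μ : M} {a v : Fin n → M}
    (h : ∀ i, μ * v i = a i * v (i + 1)) (k : ℕ) (i : Fin n) :
    μ ^ k * v i = (∏ j ∈ Finset.range k, a (i + j)) * v (i + k) := by
  induction k generalizing i with
  | zero => simp
  | succ k ih =>
    calc μ ^ (k + 1) * v i = a i * (μ ^ k * v (i + 1)) := by
          rw [pow_succ, mul_assoc, h, mul_left_comm]
      _ = (∏ j ∈ Finset.range (k + 1), a (i + j)) * v (i + (k + 1 : ℕ)) := by
        rw [ih, Finset.prod_range_succ', ← mul_assoc, mul_comm (a i)]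
        push_cast
        simp only [add_zero, add_assoc, add_comm (1 : Fin n)]

theorem pow_card_mul_eq_prod_mul {M : Type*} [CommMonoid M] {μ : M} {a v : Fin n → M}
    (h : ∀ i, μ * v i = a i * v (i + 1)) (i : Fin n) : μ ^ n * v i = (∏ j, a j) * v i := by
  rw [pow_mul_eq_prod_range_mul h n i, Fin.natCast_self, add_zero,
    ← Fin.prod_univ_eq_prod_range (fun j => a (i + j))]
  simp only [Fin.cast_val_eq_self]
  exact congrArg (· * v i) (Fintype.prod_equiv (Equiv.addLeft i) _ a fun _ => rfl)

theorem eq_zero_of_mul_eq_of_apply_eq_zero {M₀ : Type*} [MulZeroClass M₀] [NoZeroDivisors M₀]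
    {μ : M₀} (hμ : μ ≠ 0) {a u : Fin n → M₀} {s : Fin n} (hs : u s = 0)
    (h : ∀ i ≠ s, μ * u i = a i * u (i + 1)) : u = 0 := by
  have hk : ∀ k : ℕ, u (s - k) = 0 := by
    intro k
    induction k with
    | zero => simpa using hs
    | succ k ih =>
      by_cases hi : s - ((k + 1 : ℕ) : Fin n) = s
      · rw [hi, hs]
      · have := h _ hi
        rw [show s - ((k + 1 : ℕ) : Fin n) + 1 = s - k by push_cast; ring, ih, mul_zero] at this
        exact (mul_eq_zero.mp this).resolve_left hμ
  funext i
  simpa using hk (s - i : Fin n)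

theorem pow_card_eq_prod_of_cycleMatrix_mulVec_eq {K : Type*} [CommRing K] [IsDomain K]
    {w : Fin n → K} {μ : K} {v : Fin n → K} (hv0 : v ≠ 0)
    (hv : cycleMatrix w *ᵥ v = μ • v) : μ ^ n = ∏ i, w i := by
  have h : ∀ i, μ * v i = w i * v (i + 1) := fun i => by
    rw [← cycleMatrix_mulVec, hv, Pi.smul_apply, smul_eq_mul]
  obtain ⟨i, hi⟩ := Function.ne_iff.mp hv0
  exact mul_right_cancel₀ hi (pow_card_mul_eq_prod_mul h i)

theorem eq_zero_of_submatrix_cycleMatrix_mulVec_eq {K : Type*} [CommRing K] [IsDomain K]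
    {w : Fin n → K} {μ : K} {s : Fin n}
    {v : {i // i ∉ ({s} : Finset (Fin n))} → K} (hv0 : v ≠ 0)
    (hv : (cycleMatrix w).submatrix Subtype.val Subtype.val *ᵥ v = μ • v) : μ = 0 := by
  by_contra hμ
  set u : Fin n → K := fun i => if h : i ∈ ({s} : Finset (Fin n)) then 0 else v ⟨i, h⟩
  have hu : ∀ i, ¬i ∉ ({s} : Finset (Fin n)) → u i = 0 := fun i hi => dif_pos (not_not.mp hi)
  have hvu : v = fun j : {i // i ∉ ({s} : Finset (Fin n))} => u j :=
    funext fun j => by simp only [u, dif_neg j.2]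
  have h : ∀ i ≠ s, μ * u i = w i * u (i + 1) := fun i hi => by
    have hi' : i ∉ ({s} : Finset (Fin n)) := by simpa using hi
    rw [← cycleMatrix_mulVec, ← submatrix_val_mulVec _ hu ⟨i, hi'⟩, ← hvu, hv, Pi.smul_apply,
      smul_eq_mul, hvu]
  have hu0 : u = 0 :=
    eq_zero_of_mul_eq_of_apply_eq_zero hμ (dif_pos (Finset.mem_singleton_self s)) h
  exact hv0 (by rw [hvu, hu0]; rfl)

theorem specRad_cycleMatrix {w : Fin n → ℝ} (hw : ∀ i, 0 < w i) :
    specRad (cycleMatrix w) = (∏ i, w i) ^ ((1 : ℝ) / (n : ℝ)) := by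
  refine specRad_eq_of_forall_eigenvalue_norm_eq fun μ v hv0 hv => ?_
  rw [cycleMatrix_map _ Complex.ofReal_zero] at hv
  have hμ : ‖μ‖ ^ n = ∏ i, w i := by
    rw [← norm_pow, pow_card_eq_prod_of_cycleMatrix_mulVec_eq hv0 hv]
    simp only [Function.comp_apply, ← Complex.ofReal_prod]
    exact Complex.norm_of_nonneg (Finset.prod_pos fun i _ => hw i).le
  rw [← hμ, one_div, Real.pow_rpow_inv_natCast (norm_nonneg μ) (NeZero.ne n)]

theorem specRad_delSub_cycleMatrix_singleton (w : Fin n → ℝ) (s : Fin n) :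
    specRad (delSub (cycleMatrix w) {s}) = 0 := by
  refine specRad_eq_zero_of_forall_eigenvalue_eq_zero fun μ v hv0 hv => ?_
  rw [delSub, ← submatrix_map, cycleMatrix_map _ Complex.ofReal_zero] at hv
  exact eq_zero_of_submatrix_cycleMatrix_mulVec_eq hv0 hv

end CycleMatrix

/-- A weighted Hamiltonian cycle: the spectral radius is the geometric mean of the weights,
every vertex has spectral influence `1`, and the spectral cyclicality is `n`. -/
theorem hamiltonian_cycle_cyclicality {n : ℕ} (hn : 2 ≤ n) (w : Fin n → ℝ)
    (hw : ∀ i, 0 < w i) (W : Matrix (Fin n) (Fin n) ℝ)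
    (hWdef : ∀ i j : Fin n, W i j = if (j : ℕ) = ((i : ℕ) + 1) % n then w i else 0) :
    specRad W = (∏ i, w i) ^ ((1 : ℝ) / (n : ℝ)) ∧
    (∀ s : Fin n, specRad (delSub W {s}) = 0) ∧
    (∀ s : Fin n, (specRad W - specRad (delSub W {s})) / specRad W = 1) ∧
    (∑ s : Fin n, (specRad W - specRad (delSub W {s})) / specRad W) = (n : ℝ) := by
  have : NeZero n := ⟨by omega⟩
  obtain rfl : W = cycleMatrix w := by
    ext i j
    rw [hWdef, cycleMatrix_apply]
    exact if_congr Fin.val_eq_val_add_one_mod_iff rfl rfl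
  have hρ : specRad (cycleMatrix w) ≠ 0 := by
    rw [specRad_cycleMatrix hw]
    exact (Real.rpow_pos_of_pos (Finset.prod_pos fun i _ => hw i) _).ne'
  have hinfluence (s : Fin n) : (specRad (cycleMatrix w) - specRad (delSub (cycleMatrix w) {s})) /
      specRad (cycleMatrix w) = 1 := by
    rw [specRad_delSub_cycleMatrix_singleton, sub_zero, div_self hρ]
  refine ⟨specRad_cycleMatrix hw, specRad_delSub_cycleMatrix_singleton w, hinfluence, ?_⟩
  simp [hinfluence]
end

section
/- Let a, b, c, d be nonnegative real numbers, not all zero in the sense that a + d + Δ > 0 where Δ = √((a − d)² + 4bc), and let W be the 2×2 matrix with rows (a, b) and (c, d). Then the spectral cyclicality of W equals 𝐒 = 2Δ/(a + d + Δ); equivalently, when Δ > 0, 𝐒 = 2/(1 + (a + d)/Δ). -/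
open Matrix BigOperators

/-!
The characteristic polynomial of `!![a, b; c, d]` is `(X - λ₊) (X - λ₋)` with
`λ± = (a + d ± Δ) / 2`, both real since `bc ≥ 0`, and `|λ₋| ≤ λ₊` because
`λ₊ + λ₋ = a + d ≥ 0`; so `ρ(W) = λ₊`. Deleting either vertex leaves a `1 × 1` matrix, of
spectral radius `d` or `a`.
Hence `𝐒 = (2λ₊ - a - d) / λ₊ = 2Δ / (a + d + Δ)`.
-/

open Polynomial

lemma specRad_eq_sSup_norm {m : Type*} [Fintype m] [DecidableEq m] (W : Matrix m m ℝ) :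
    specRad W = sSup (norm '' {μ : ℂ | (W.map Complex.ofReal).charpoly.IsRoot μ}) := by
  unfold specRad
  congr 1
  ext r
  simp [eq_comm]

lemma specRad_eq_abs_of_forall_eq {m : Type*} [Fintype m] [DecidableEq m] (W : Matrix m m ℝ)
    (i : m) (hi : ∀ j, j = i) : specRad W = |W i i| := by
  let _ : Unique m := ⟨⟨i⟩, hi⟩
  have hcp : (W.map Complex.ofReal).charpoly = X - C (W i i : ℂ) := by
    rw [Matrix.charpoly, Matrix.det_unique, Matrix.charmatrix_apply_eq, Matrix.map_apply,
      show (default : m) = i from hi _]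
  rw [specRad_eq_sSup_norm, hcp]
  simp [sub_eq_zero, Set.image_singleton]

lemma specRad_eq_max_abs_of_charpoly_eq_mul {m : Type*} [Fintype m] [DecidableEq m]
    (W : Matrix m m ℝ) {μ₁ μ₂ : ℝ}
    (h : (W.map Complex.ofReal).charpoly = (X - C (μ₁ : ℂ)) * (X - C (μ₂ : ℂ))) :
    specRad W = max |μ₁| |μ₂| := by
  rw [specRad_eq_sSup_norm, h, max_comm]
  simp [sub_eq_zero, Set.ofPred_or, Set.image_insert_eq, Set.image_singleton]

lemma Matrix.charpoly_fin_two_eq_mul {R : Type*} [CommRing R] [Nontrivial R]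
    (M : Matrix (Fin 2) (Fin 2) R) {μ₁ μ₂ : R} (hsum : μ₁ + μ₂ = M.trace)
    (hprod : μ₁ * μ₂ = M.det) : M.charpoly = (X - C μ₁) * (X - C μ₂) := by
  rw [M.charpoly_fin_two, ← hsum, ← hprod, C_add, C_mul]
  ring

lemma specRad_fin_two {a b c d : ℝ} (had : 0 ≤ a + d) (hbc : 0 ≤ b * c) :
    specRad !![a, b; c, d] = (a + d + √((a - d) ^ 2 + 4 * b * c)) / 2 := by
  set Δ := √((a - d) ^ 2 + 4 * b * c)
  have hΔ_nonneg : 0 ≤ Δ := Real.sqrt_nonneg _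
  have hΔ_sq : Δ ^ 2 = (a - d) ^ 2 + 4 * b * c := Real.sq_sqrt (by nlinarith [sq_nonneg (a - d)])
  have hcp : (!![a, b; c, d].map Complex.ofReal).charpoly =
      (X - C (((a + d + Δ) / 2 : ℝ) : ℂ)) * (X - C (((a + d - Δ) / 2 : ℝ) : ℂ)) := by
    refine Matrix.charpoly_fin_two_eq_mul _ ?_ ?_
    · push_cast [Matrix.trace_fin_two, Matrix.map_apply, Matrix.of_apply, Matrix.cons_val',
        Matrix.cons_val_zero, Matrix.cons_val_one, Matrix.cons_val_fin_one]
      ring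
    · have hΔ_sq' : (Δ : ℂ) ^ 2 = (a - d) ^ 2 + 4 * b * c := by exact_mod_cast hΔ_sq
      push_cast [Matrix.det_fin_two, Matrix.map_apply, Matrix.of_apply, Matrix.cons_val',
        Matrix.cons_val_zero, Matrix.cons_val_one, Matrix.cons_val_fin_one]
      linear_combination (-1 / 4 : ℂ) * hΔ_sq'
  rw [specRad_eq_max_abs_of_charpoly_eq_mul _ hcp,
    abs_of_nonneg (by positivity : 0 ≤ (a + d + Δ) / 2)]
  exact max_eq_left (abs_le.mpr ⟨by linarith, by linarith⟩)

lemma specRad_delSub_fin_two (W : Matrix (Fin 2) (Fin 2) ℝ) (s : Fin 2) :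
    specRad (delSub W {s}) = |W s.rev s.rev| := by
  refine specRad_eq_abs_of_forall_eq (delSub W {s}) ⟨s.rev, by fin_cases s <;> decide⟩ ?_
  rintro ⟨j, hj⟩
  have hjs := Fin.val_ne_iff.mpr (Finset.mem_singleton.not.mp hj)
  ext
  simp only [Fin.val_rev]
  omega

theorem cyclicality_two_by_two_general (a b c d : ℝ) (ha : 0 ≤ a) (hb : 0 ≤ b) (hc : 0 ≤ c)
    (hd : 0 ≤ d) (Δ : ℝ) (hΔ : Δ = Real.sqrt ((a - d) ^ 2 + 4 * b * c)) :
    (∑ s : Fin 2,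
        (specRad !![a, b; c, d] - specRad (delSub !![a, b; c, d] {s})) /
          specRad !![a, b; c, d]) = 2 * Δ / (a + d + Δ) ∧
    (0 < Δ →
      (∑ s : Fin 2,
          (specRad !![a, b; c, d] - specRad (delSub !![a, b; c, d] {s})) /
            specRad !![a, b; c, d]) = 2 / (1 + (a + d) / Δ)) := by
  have hρ : specRad !![a, b; c, d] = (a + d + Δ) / 2 :=
    hΔ ▸ specRad_fin_two (by positivity) (by positivity)
  have hsum : (∑ s : Fin 2,
      (specRad !![a, b; c, d] - specRad (delSub !![a, b; c, d] {s})) /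
        specRad !![a, b; c, d]) = 2 * Δ / (a + d + Δ) := by
    simp only [Fin.sum_univ_two, specRad_delSub_fin_two, hρ, Fin.rev_zero, Fin.reduceLast,
      Fin.reduceRev, Matrix.of_apply, Matrix.cons_val', Matrix.cons_val_zero, Matrix.cons_val_one,
      Matrix.cons_val_fin_one, abs_of_nonneg ha, abs_of_nonneg hd]
    rw [← add_div, div_div_eq_mul_div]
    ring
  refine ⟨hsum, fun hΔ_pos => ?_⟩
  rw [hsum, one_add_div hΔ_pos.ne', div_div_eq_mul_div]
  ring

/-- The spectral cyclicality of the nonnegative `2 × 2` matrix with rows `(a, b)` and `(c, d)`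
equals `2Δ / (a + d + Δ)` where `Δ = √((a - d)² + 4bc)`; equivalently, when `Δ > 0`, it equals
`2 / (1 + (a + d) / Δ)`. -/
theorem cyclicality_two_by_two (a b c d : ℝ) (ha : 0 ≤ a) (hb : 0 ≤ b) (hc : 0 ≤ c)
    (hd : 0 ≤ d) (Δ : ℝ) (hΔ : Δ = Real.sqrt ((a - d) ^ 2 + 4 * b * c))
    (hpos : 0 < a + d + Δ) :
    (∑ s : Fin 2,
        (specRad !![a, b; c, d] - specRad (delSub !![a, b; c, d] {s})) /
          specRad !![a, b; c, d]) = 2 * Δ / (a + d + Δ) ∧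
    (0 < Δ →
      (∑ s : Fin 2,
          (specRad !![a, b; c, d] - specRad (delSub !![a, b; c, d] {s})) /
            specRad !![a, b; c, d]) = 2 / (1 + (a + d) / Δ)) :=
  cyclicality_two_by_two_general a b c d ha hb hc hd Δ hΔ
end
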